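/- Let n ≥ 1, let S be a symmetric positive definite real n×n matrix, and let C ⊆ ℝⁿ be a nonempty closed convex set with 0 ∈ C. Then for every z ∈ ℝⁿ, ψ(z) = sup_{q ∈ C} ( ⟨z, q⟩ − ½ ⟨S⁻¹ q, q⟩ ), and this supremum is attained at a unique point of C. -/

import Mathlib

open Matrix
open scoped RealInnerProductSpace

/-- The support function `h(z) = sup_{q ∈ C} ⟨q, z⟩`, with values in `[0, +∞]` (extended reals). -/
noncomputable def hsupp {n : ℕ} (C : Set (EuclideanSpace ℝ (Fin n)))
    (z : EuclideanSpace ℝ (Fin n)) : EReal :=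
  ⨆ q ∈ C, ((⟪q, z⟫ : ℝ) : EReal)

/-- The infimal convolution
`ψ(z) = inf_{z'} { ½ ⟨S(z - z'), z - z'⟩ + h(z') }`. -/
noncomputable def psi {n : ℕ} (S : Matrix (Fin n) (Fin n) ℝ)
    (C : Set (EuclideanSpace ℝ (Fin n))) (z : EuclideanSpace ℝ (Fin n)) : EReal :=
  ⨅ z' : EuclideanSpace ℝ (Fin n),
    (((2⁻¹ * ⟪Matrix.toEuclideanLin S (z - z'), z - z'⟫ : ℝ) : EReal) + hsupp C z')

/-!
Write `P = S⁻¹` and `f q = ⟪z, q⟫ - ½⟪P q, q⟫`. Since `P` is positive definite, `f` tends to `-∞`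
at infinity, so it attains its maximum on the closed set `C` at some `q₀`; by convexity of `C` this
maximiser satisfies the variational inequality `⟪z - P q₀, q - q₀⟫ ≤ 0` on `C`, which together with
the quadratic expansion of `f` around `q₀` forces uniqueness. The same inequality says that the
support function of `C` at `z' = z - P q₀` is attained at `q₀`, so this `z'` gives `ψ z ≤ f q₀`;
conversely the Fenchel–Young inequality `⟪q, u⟫ ≤ ½⟪S u, u⟫ + ½⟪P q, q⟫` gives `f q ≤ ψ z` for
every `q ∈ C`.
-/

open Filter Topology Set

variable {E : Type*} [NormedAddCommGroup E] [InnerProductSpace ℝ E]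

noncomputable def dualObjective (T : E →ₗ[ℝ] E) (z q : E) : ℝ := ⟪z, q⟫ - 2⁻¹ * ⟪T q, q⟫

section
variable {T : E →ₗ[ℝ] E} {C : Set E} {z q₀ : E}

theorem LinearMap.IsPositive.two_mul_inner_le_add (hT : T.IsPositive) (x y : E) :
    2 * ⟪T x, y⟫ ≤ ⟪T x, x⟫ + ⟪T y, y⟫ := by
  have h := hT.inner_nonneg_left (x - y)
  rw [map_sub, inner_sub_left, inner_sub_right, inner_sub_right, hT.isSymmetric y x,
    real_inner_comm (T x) y] at h
  linarith

theorem dualObjective_add_smul (hT : T.IsSymmetric) (z q d : E) (t : ℝ) :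
    dualObjective T z (q + t • d) =
      dualObjective T z q + t * ⟪z - T q, d⟫ - 2⁻¹ * t ^ 2 * ⟪T d, d⟫ := by
  simp only [dualObjective, map_add, map_smul, inner_add_left, inner_add_right,
    inner_sub_left, real_inner_smul_left, real_inner_smul_right, hT d q]
  rw [real_inner_comm (T q) d]
  ring

theorem inner_sub_nonpos_of_isMaxOn_dualObjective (hT : T.IsSymmetric) (hC : Convex ℝ C)
    (hq₀ : q₀ ∈ C) (hmax : IsMaxOn (dualObjective T z) C q₀) {q : E} (hq : q ∈ C) :
    ⟪z - T q₀, q - q₀⟫ ≤ 0 := by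
  set d := q - q₀
  have hslope : ∀ t ∈ Ioo (0 : ℝ) 1, ⟪z - T q₀, d⟫ ≤ 2⁻¹ * t * ⟪T d, d⟫ := by
    rintro t ⟨ht₀, ht₁⟩
    have hmem : q₀ + t • d ∈ C := by
      convert hC hq₀ hq (by linarith : 0 ≤ 1 - t) ht₀.le (by ring) using 1
      module
    have h : dualObjective T z (q₀ + t • d) ≤ dualObjective T z q₀ := hmax hmem
    rw [dualObjective_add_smul hT] at h
    nlinarith
  have hlim : Tendsto (fun t : ℝ => 2⁻¹ * t * ⟪T d, d⟫) (𝓝[>] 0) (𝓝 0) := by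
    have : Continuous (fun t : ℝ => 2⁻¹ * t * ⟪T d, d⟫) := by fun_prop
    simpa using (this.tendsto 0).mono_left nhdsWithin_le_nhds
  exact ge_of_tendsto hlim (eventually_of_mem (Ioo_mem_nhdsGT one_pos) hslope)

theorem dualObjective_le_sub_of_isMaxOn (hT : T.IsSymmetric) (hC : Convex ℝ C) (hq₀ : q₀ ∈ C)
    (hmax : IsMaxOn (dualObjective T z) C q₀) {q : E} (hq : q ∈ C) :
    dualObjective T z q ≤ dualObjective T z q₀ - 2⁻¹ * ⟪T (q - q₀), q - q₀⟫ := by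
  have h := dualObjective_add_smul hT z q₀ (q - q₀) 1
  rw [one_smul, add_sub_cancel] at h
  rw [h]
  nlinarith [inner_sub_nonpos_of_isMaxOn_dualObjective hT hC hq₀ hmax hq]

theorem eq_of_isMaxOn_dualObjective (hT : T.IsSymmetric) (hTpos : ∀ x ≠ 0, 0 < ⟪T x, x⟫)
    (hC : Convex ℝ C) {q₁ : E} (hq₀ : q₀ ∈ C) (hq₁ : q₁ ∈ C)
    (hmax₀ : IsMaxOn (dualObjective T z) C q₀) (hmax₁ : IsMaxOn (dualObjective T z) C q₁) :
    q₁ = q₀ := by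
  by_contra hne
  have h := dualObjective_le_sub_of_isMaxOn hT hC hq₀ hmax₀ hq₁
  have h₁ : dualObjective T z q₀ ≤ dualObjective T z q₁ := hmax₁ hq₀
  linarith [hTpos _ (sub_ne_zero.mpr hne)]

theorem exists_pos_mul_sq_norm_le_inner [FiniteDimensional ℝ E]
    (hTpos : ∀ x ≠ 0, 0 < ⟪T x, x⟫) : ∃ μ > 0, ∀ x, μ * ‖x‖ ^ 2 ≤ ⟪T x, x⟫ := by
  rcases subsingleton_or_nontrivial E with hE | hE
  · exact ⟨1, one_pos, fun x => by simp [Subsingleton.elim x 0]⟩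
  have hcont : Continuous fun x : E => ⟪T x, x⟫ :=
    T.continuous_of_finiteDimensional.inner continuous_id
  obtain ⟨x₀, hx₀, hmin⟩ := (isCompact_sphere (0 : E) 1).exists_isMinOn
    (NormedSpace.sphere_nonempty.mpr zero_le_one) hcont.continuousOn
  refine ⟨⟪T x₀, x₀⟫, hTpos x₀ (ne_zero_of_mem_unit_sphere ⟨x₀, hx₀⟩), fun x => ?_⟩
  rcases eq_or_ne x 0 with rfl | hx
  · simp
  have hx' : 0 < ‖x‖ := norm_pos_iff.mpr hx
  have h : ⟪T x₀, x₀⟫ ≤ ⟪T (‖x‖⁻¹ • x), ‖x‖⁻¹ • x⟫ :=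
    hmin (show ‖x‖⁻¹ • x ∈ Metric.sphere (0 : E) 1 by simp [norm_smul, hx'.ne'])
  rw [map_smul, real_inner_smul_left, real_inner_smul_right] at h
  calc ⟪T x₀, x₀⟫ * ‖x‖ ^ 2 ≤ ‖x‖⁻¹ * (‖x‖⁻¹ * ⟪T x, x⟫) * ‖x‖ ^ 2 := by gcongr
    _ = ⟪T x, x⟫ := by field_simp

theorem tendsto_dualObjective_cocompact_atBot [FiniteDimensional ℝ E]
    (hTpos : ∀ x ≠ 0, 0 < ⟪T x, x⟫) (z : E) :
    Tendsto (dualObjective T z) (cocompact E) atBot := by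
  obtain ⟨μ, hμ, hle⟩ := exists_pos_mul_sq_norm_le_inner hTpos
  have hbound : ∀ q, dualObjective T z q ≤ ‖q‖ * (‖z‖ - 2⁻¹ * μ * ‖q‖) := by
    intro q
    unfold dualObjective
    nlinarith [real_inner_le_norm z q, hle q]
  refine tendsto_atBot_mono hbound (tendsto_norm_cocompact_atTop.atTop_mul_atBot₀ ?_)
  simpa only [sub_eq_add_neg, Function.comp_def] using tendsto_atBot_add_const_left _ ‖z‖
    (tendsto_neg_atTop_atBot.comp (tendsto_norm_cocompact_atTop.const_mul_atTop (by positivity)))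

theorem exists_isMaxOn_dualObjective [FiniteDimensional ℝ E] (hTpos : ∀ x ≠ 0, 0 < ⟪T x, x⟫)
    (hCcl : IsClosed C) (hCne : C.Nonempty) (z : E) :
    ∃ q₀ ∈ C, IsMaxOn (dualObjective T z) C q₀ := by
  obtain ⟨q, hq⟩ := hCne
  have hcont : Continuous (dualObjective T z) :=
    (continuous_const.inner continuous_id).sub
      (continuous_const.mul (T.continuous_of_finiteDimensional.inner continuous_id))
  have hfar : ∀ᶠ q' in cocompact E, dualObjective T z q' ≤ dualObjective T z q :=
    (tendsto_dualObjective_cocompact_atBot hTpos z).eventually (eventually_le_atBot _)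
  exact hcont.continuousOn.exists_isMaxOn' hCcl hq (hfar.filter_mono inf_le_left)

end

section Matrix
variable {ι : Type*} [Fintype ι] [DecidableEq ι]

theorem Matrix.PosDef.inner_toEuclideanLin_self_pos {A : Matrix ι ι ℝ} (hA : A.PosDef)
    {x : EuclideanSpace ℝ ι} (hx : x ≠ 0) : 0 < ⟪toEuclideanLin A x, x⟫ := by
  simpa [EuclideanSpace.inner_eq_star_dotProduct, dotProduct_comm] using
    hA.dotProduct_mulVec_pos (x := WithLp.ofLp x) (by simpa using hx)

theorem Matrix.toEuclideanLin_apply_toEuclideanLin_inv {𝕜 : Type*} [RCLike 𝕜]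
    {A : Matrix ι ι 𝕜} (hA : IsUnit A) (x : EuclideanSpace 𝕜 ι) :
    toEuclideanLin A (toEuclideanLin A⁻¹ x) = x := by
  simp [toLpLin_apply, mulVec_mulVec, mul_nonsing_inv A ((isUnit_iff_isUnit_det A).mp hA)]

theorem Matrix.PosDef.inner_le_inner_toEuclideanLin_add_inv {A : Matrix ι ι ℝ} (hA : A.PosDef)
    (q u : EuclideanSpace ℝ ι) :
    ⟪q, u⟫ ≤ 2⁻¹ * ⟪toEuclideanLin A u, u⟫ + 2⁻¹ * ⟪toEuclideanLin A⁻¹ q, q⟫ := by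
  have hpos := isPositive_toEuclideanLin_iff.mpr hA.posSemidef
  have h := hpos.two_mul_inner_le_add u (toEuclideanLin A⁻¹ q)
  rw [hpos.isSymmetric, toEuclideanLin_apply_toEuclideanLin_inv hA.isUnit, real_inner_comm q u,
    real_inner_comm (toEuclideanLin A⁻¹ q) q] at h
  linarith

end Matrix

section Duality
variable {n : ℕ} {S : Matrix (Fin n) (Fin n) ℝ} {C : Set (EuclideanSpace ℝ (Fin n))}
  {z q₀ w : EuclideanSpace ℝ (Fin n)}

theorem le_hsupp {q : EuclideanSpace ℝ (Fin n)} (hq : q ∈ C) :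
    ((⟪q, w⟫ : ℝ) : EReal) ≤ hsupp C w :=
  le_iSup₂ (f := fun q (_ : q ∈ C) => ((⟪q, w⟫ : ℝ) : EReal)) q hq

theorem hsupp_eq_of_forall_inner_le (hq₀ : q₀ ∈ C) (h : ∀ q ∈ C, ⟪q, w⟫ ≤ ⟪q₀, w⟫) :
    hsupp C w = ⟪q₀, w⟫ :=
  le_antisymm (iSup₂_le fun q hq => EReal.coe_le_coe_iff.mpr (h q hq)) (le_hsupp hq₀)

theorem dualObjective_le_psi (hS : S.PosDef) {q : EuclideanSpace ℝ (Fin n)} (hq : q ∈ C) :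
    (dualObjective (toEuclideanLin S⁻¹) z q : EReal) ≤ psi S C z := by
  refine le_iInf fun z' => ?_
  have key : dualObjective (toEuclideanLin S⁻¹) z q ≤
      2⁻¹ * ⟪toEuclideanLin S (z - z'), z - z'⟫ + ⟪q, z'⟫ := by
    have := hS.inner_le_inner_toEuclideanLin_add_inv q (z - z')
    rw [inner_sub_right, real_inner_comm z q] at this
    unfold dualObjective
    linarith
  calc (dualObjective (toEuclideanLin S⁻¹) z q : EReal)
      ≤ ((2⁻¹ * ⟪toEuclideanLin S (z - z'), z - z'⟫ : ℝ) : EReal) + ((⟪q, z'⟫ : ℝ) : EReal) := by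
        exact_mod_cast key
    _ ≤ _ := by gcongr; exact le_hsupp hq

theorem psi_le_dualObjective_of_isMaxOn (hS : S.PosDef) (hC : Convex ℝ C) (hq₀ : q₀ ∈ C)
    (hmax : IsMaxOn (dualObjective (toEuclideanLin S⁻¹) z) C q₀) :
    psi S C z ≤ dualObjective (toEuclideanLin S⁻¹) z q₀ := by
  set P := toEuclideanLin S⁻¹
  have hP : P.IsSymmetric := isSymmetric_toEuclideanLin_iff.mpr hS.inv.isHermitian
  have hsupp_eq : hsupp C (z - P q₀) = ⟪q₀, z - P q₀⟫ := by
    refine hsupp_eq_of_forall_inner_le hq₀ fun q hq => ?_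
    have := inner_sub_nonpos_of_isMaxOn_dualObjective hP hC hq₀ hmax hq
    rw [inner_sub_right, real_inner_comm, real_inner_comm q₀] at this
    linarith
  refine (iInf_le _ (z - P q₀)).trans_eq ?_
  rw [sub_sub_cancel, hsupp_eq, ← EReal.coe_add,
    toEuclideanLin_apply_toEuclideanLin_inv hS.isUnit]
  unfold dualObjective
  rw [inner_sub_right, real_inner_comm q₀ z, real_inner_comm q₀ (P q₀)]
  norm_cast
  ring

end Duality

theorem stmt15_general {n : ℕ} (S : Matrix (Fin n) (Fin n) ℝ) (hS : S.PosDef)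
    (C : Set (EuclideanSpace ℝ (Fin n))) (hCne : C.Nonempty) (hCcl : IsClosed C)
    (hCco : Convex ℝ C)
    (z : EuclideanSpace ℝ (Fin n)) :
    ∃! q₀ : EuclideanSpace ℝ (Fin n), q₀ ∈ C ∧
      IsGreatest
        ((fun q => ⟪z, q⟫ - 2⁻¹ * ⟪Matrix.toEuclideanLin S⁻¹ q, q⟫) '' C)
        (⟪z, q₀⟫ - 2⁻¹ * ⟪Matrix.toEuclideanLin S⁻¹ q₀, q₀⟫) ∧
      psi S C z = ((⟪z, q₀⟫ - 2⁻¹ * ⟪Matrix.toEuclideanLin S⁻¹ q₀, q₀⟫ : ℝ) : EReal) := by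
  have hP : (toEuclideanLin S⁻¹).IsSymmetric :=
    isSymmetric_toEuclideanLin_iff.mpr hS.inv.isHermitian
  have hPpos : ∀ x ≠ 0, 0 < ⟪toEuclideanLin S⁻¹ x, x⟫ :=
    fun _ hx => hS.inv.inner_toEuclideanLin_self_pos hx
  obtain ⟨q₀, hq₀, hmax⟩ := exists_isMaxOn_dualObjective hPpos hCcl hCne z
  refine ⟨q₀, ⟨hq₀, ⟨Set.mem_image_of_mem _ hq₀, ?_⟩, ?_⟩, ?_⟩
  · rintro _ ⟨q, hq, rfl⟩
    exact hmax hq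
  · exact le_antisymm (psi_le_dualObjective_of_isMaxOn hS hCco hq₀ hmax)
      (dualObjective_le_psi hS hq₀)
  · rintro q₁ ⟨hq₁, hgreat, -⟩
    exact eq_of_isMaxOn_dualObjective hP hPpos hCco hq₀ hq₁ hmax
      fun q hq => hgreat.2 ⟨q, hq, rfl⟩

theorem stmt15 {n : ℕ} (hn : 1 ≤ n) (S : Matrix (Fin n) (Fin n) ℝ) (hS : S.PosDef)
    (C : Set (EuclideanSpace ℝ (Fin n))) (hCne : C.Nonempty) (hCcl : IsClosed C)
    (hCco : Convex ℝ C) (hC0 : (0 : EuclideanSpace ℝ (Fin n)) ∈ C)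
    (z : EuclideanSpace ℝ (Fin n)) :
    ∃! q₀ : EuclideanSpace ℝ (Fin n), q₀ ∈ C ∧
      IsGreatest
        ((fun q => ⟪z, q⟫ - 2⁻¹ * ⟪Matrix.toEuclideanLin S⁻¹ q, q⟫) '' C)
        (⟪z, q₀⟫ - 2⁻¹ * ⟪Matrix.toEuclideanLin S⁻¹ q₀, q₀⟫) ∧
      psi S C z = ((⟪z, q₀⟫ - 2⁻¹ * ⟪Matrix.toEuclideanLin S⁻¹ q₀, q₀⟫ : ℝ) : EReal) :=
  stmt15_general S hS C hCne hCcl hCco z
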